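/- For n ≥ 3 and t ≥ 1, the cooling number of ILT_t(P_n) equals ⌈2n/3⌉ if t = 1 and n ≡ 2 (mod 3), and equals ⌈2n/3⌉ + 1 otherwise. -/

import Mathlib

/-- A cooling sequence for `G`: a sequence `v : Fin k → V` of sources (the `i`-th source,
0-based, is chosen in round `i + 1`) such that each source is uncooled when chosen
(`dist (v i) (v j) > j - i` for `i < j` in 1-based indexing), and the sequence cannot be
extended: every vertex is cooled by the end of round `k + 1`. -/
def IsCoolingSeq {V : Type*} (G : SimpleGraph V) {k : ℕ} (v : Fin k → V) : Prop :=
  (∀ i j : Fin k, i < j → (j : ℕ) - (i : ℕ) < G.dist (v i) (v j)) ∧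
  (∀ u : V, ∃ i : Fin k, (i : ℕ) + 1 + G.dist (v i) u ≤ k + 1)

/-- The round in which the cooling process with sources `v` ends: the maximum over
vertices `u` of the first round in which `u` is cooled, `min_i (i + dist (v i) u)`
(1-based `i`). -/
noncomputable def coolTime {V : Type*} [Fintype V] (G : SimpleGraph V) {k : ℕ}
    (v : Fin k → V) : ℕ :=
  Finset.univ.sup fun u : V => sInf {m : ℕ | ∃ i : Fin k, m = (i : ℕ) + 1 + G.dist (v i) u}

/-- The cooling number of `G`: the maximum, over all cooling sequences of `G`, of the
round in which the cooling process ends. -/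
noncomputable def coolingNumber {V : Type*} [Fintype V] (G : SimpleGraph V) : ℕ :=
  sSup {T : ℕ | ∃ (k : ℕ) (v : Fin k → V), IsCoolingSeq G v ∧ T = coolTime G v}

/-- The Iterated Local Transitivity graph of `G`, on vertex set `V ⊕ V`, where `Sum.inr x`
is the clone of the original vertex `Sum.inl x`: clones are adjacent to their original
vertex and to its neighbors, and clones are pairwise non-adjacent. -/
def ILT {V : Type*} (G : SimpleGraph V) : SimpleGraph (V ⊕ V) :=
  SimpleGraph.fromRel fun a b =>
    match a, b with
    | Sum.inl x, Sum.inl y => G.Adj x y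
    | Sum.inl x, Sum.inr y => x = y ∨ G.Adj x y
    | Sum.inr x, Sum.inl y => x = y ∨ G.Adj x y
    | Sum.inr _, Sum.inr _ => False

/-- The vertex type of `ILT_t(G)`. -/
def ILTVert (V : Type*) : ℕ → Type _
  | 0 => V
  | t + 1 => ILTVert V t ⊕ ILTVert V t

instance ILTVert.fintype (V : Type*) [Fintype V] : ∀ t, Fintype (ILTVert V t)
  | 0 => inferInstanceAs (Fintype V)
  | t + 1 =>
    letI := ILTVert.fintype V t
    inferInstanceAs (Fintype (ILTVert V t ⊕ ILTVert V t))

/-- `ILTiter G t` is the result of `t` iterated applications of the ILT construction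
to `G`. -/
def ILTiter {V : Type*} (G : SimpleGraph V) : (t : ℕ) → SimpleGraph (ILTVert V t)
  | 0 => G
  | t + 1 => ILT (ILTiter G t)

/-!
Project every vertex of `ILT_t(P_n)` to the vertex of `P_n` it descends from. Distances in
`ILT_t(P_n)` lie between the distance of the projections and its maximum with `2`, and distinct
clones are at distance at least `2`. So the positions of the sources of a cooling sequence are
spaced: sources two or more rounds apart are farther apart on the path than in time. A window
of three consecutive positions then holds at most two sources and one of four at most three,
which bounds the length of the sequence by `⌈2n/3⌉` and the cooling time by `⌈2n/3⌉ + 1`.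
Clones of the vertices at positions `0, 1, 3, 4, 6, 7, …` attain this bound, the last vertex
cooled being a vertex at the end of the path (a fresh clone of it when `t ≥ 2`).

For `t = 1` and `n ≡ 2 (mod 3)`, a sequence of maximal length puts two sources on every pair
of positions `{3a, 3a + 1}`. A vertex still uncooled after round `⌈2n/3⌉` is within distance `2`
only of the last two sources, which forces it and them onto one such pair. An original vertex is
within distance `1` of every vertex whose position is within `1` of its own, so all three are
clones, of three distinct vertices of `P_n` on two positions: impossible.
-/

open SimpleGraph Finset

variable {V : Type*} {G : SimpleGraph V}

theorem SimpleGraph.Walk.exists_length_le_of_adj_imp {W : Type*} {H : SimpleGraph W}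
    {f : V → W} (hf : ∀ ⦃a b⦄, G.Adj a b → f a = f b ∨ H.Adj (f a) (f b)) {a b : V}
    (p : G.Walk a b) : ∃ q : H.Walk (f a) (f b), q.length ≤ p.length := by
  induction p with
  | nil => exact ⟨.nil, le_rfl⟩
  | cons h _ ih =>
    obtain ⟨q, hq⟩ := ih
    rcases hf h with heq | hadj
    · exact ⟨q.copy heq.symm rfl, by simp only [Walk.length_copy, Walk.length_cons]; omega⟩
    · exact ⟨.cons hadj q, by simpa⟩

theorem SimpleGraph.Reachable.dist_le_of_adj_imp {W : Type*} {H : SimpleGraph W}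
    {f : V → W} (hf : ∀ ⦃a b⦄, G.Adj a b → f a = f b ∨ H.Adj (f a) (f b)) {a b : V}
    (h : G.Reachable a b) : H.dist (f a) (f b) ≤ G.dist a b := by
  obtain ⟨p, hp⟩ := h.exists_walk_length_eq_dist
  obtain ⟨q, hq⟩ := p.exists_length_le_of_adj_imp hf
  exact (dist_le q).trans (hp ▸ hq)

theorem SimpleGraph.pathGraph_connected_of_pos {n : ℕ} (hn : 0 < n) :
    (pathGraph n).Connected :=
  have : Nonempty (Fin n) := ⟨⟨0, hn⟩⟩
  ⟨pathGraph_preconnected n⟩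

theorem SimpleGraph.pathGraph_natDist_le_length {n : ℕ} {u v : Fin n}
    (p : (pathGraph n).Walk u v) : Nat.dist u v ≤ p.length := by
  induction p with
  | nil => simp
  | cons h _ ih =>
    rw [pathGraph_adj] at h
    rw [Walk.length_cons]
    unfold Nat.dist at *
    omega

theorem SimpleGraph.pathGraph_dist_le_of_val_eq_add {n : ℕ} :
    ∀ (d : ℕ) {u v : Fin n}, (v : ℕ) = u + d → (pathGraph n).dist u v ≤ d
  | 0, u, v, h => by simp [Fin.ext h]
  | d + 1, u, v, h => by
    have hw : (u : ℕ) + 1 < n := by omega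
    have hadj : (pathGraph n).Adj u ⟨u + 1, hw⟩ := by simp [pathGraph_adj]
    calc (pathGraph n).dist u v
        ≤ (pathGraph n).dist u ⟨u + 1, hw⟩ + (pathGraph n).dist ⟨u + 1, hw⟩ v :=
          (pathGraph_connected_of_pos (by omega)).dist_triangle
      _ ≤ 1 + d := by
          rw [dist_eq_one_iff_adj.mpr hadj]
          exact Nat.add_le_add_left (pathGraph_dist_le_of_val_eq_add d (by dsimp only; omega)) 1
      _ = d + 1 := add_comm 1 d

theorem SimpleGraph.pathGraph_dist {n : ℕ} (u v : Fin n) :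
    (pathGraph n).dist u v = Nat.dist u v := by
  apply le_antisymm
  · rcases le_total (u : ℕ) v with h | h
    · exact (pathGraph_dist_le_of_val_eq_add (v - u) (by omega)).trans (by simp [Nat.dist])
    · rw [dist_comm]
      exact (pathGraph_dist_le_of_val_eq_add (u - v) (by omega)).trans (by simp [Nat.dist])
  · obtain ⟨p, hp⟩ := (pathGraph_preconnected n u v).exists_walk_length_eq_dist
    exact hp ▸ pathGraph_natDist_le_length p

theorem SimpleGraph.Connected.exists_adj_dist_add_one_le (hG : G.Connected) {x y : V}
    (hxy : x ≠ y) : ∃ w, G.Adj x w ∧ G.dist w y + 1 ≤ G.dist x y := by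
  obtain ⟨p, hp⟩ := hG.exists_walk_length_eq_dist x y
  obtain ⟨w, h, q, rfl⟩ := p.exists_eq_cons_of_ne hxy
  exact ⟨w, h, hp ▸ by simpa using dist_le q⟩

namespace ILT

def proj : V ⊕ V → V := Sum.elim id id

@[simp] lemma proj_inl (x : V) : proj (Sum.inl x) = x := rfl

@[simp] lemma proj_inr (x : V) : proj (Sum.inr x) = x := rfl

@[simp] lemma adj_inl_inl {x y : V} : (ILT G).Adj (.inl x) (.inl y) ↔ G.Adj x y := by
  simp only [ILT, fromRel_adj]
  exact ⟨fun h => h.2.elim id fun h => h.symm, fun h => ⟨by simp [h.ne], .inl h⟩⟩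

@[simp] lemma adj_inl_inr {x y : V} : (ILT G).Adj (.inl x) (.inr y) ↔ x = y ∨ G.Adj x y := by
  simp only [ILT, fromRel_adj]
  constructor
  · rintro ⟨-, (h | h) | (h | h)⟩
    exacts [.inl h, .inr h, .inl h.symm, .inr h.symm]
  · exact fun h => ⟨by simp, .inl h⟩

@[simp] lemma adj_inr_inl {x y : V} : (ILT G).Adj (.inr x) (.inl y) ↔ x = y ∨ G.Adj x y := by
  rw [adj_comm, adj_inl_inr, eq_comm, G.adj_comm]

@[simp] lemma not_adj_inr_inr {x y : V} : ¬ (ILT G).Adj (.inr x) (.inr y) := by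
  simp [ILT]

lemma adj_inl_of_adj {a : V ⊕ V} {y : V} (h : G.Adj (proj a) y) : (ILT G).Adj a (.inl y) := by
  cases a <;> simp_all

lemma adj_inl_proj_of_ne {a : V ⊕ V} (h : a ≠ .inl (proj a)) :
    (ILT G).Adj a (.inl (proj a)) := by
  cases a <;> simp_all

lemma eq_or_adj_proj_of_adj {a b : V ⊕ V} (h : (ILT G).Adj a b) :
    proj a = proj b ∨ G.Adj (proj a) (proj b) := by
  cases a <;> cases b <;> simp_all

def inlHom (G : SimpleGraph V) : G →g ILT G where
  toFun := .inl
  map_rel' := adj_inl_inl.mpr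

lemma connected (hG : G.Connected) : (ILT G).Connected := by
  have : Nonempty (V ⊕ V) := hG.nonempty.map .inl
  refine ⟨fun a b => ?_⟩
  have toInl : ∀ c : V ⊕ V, (ILT G).Reachable c (.inl (proj c)) := fun c => by
    by_cases hc : c = .inl (proj c)
    · rw [← hc]
    · exact (adj_inl_proj_of_ne hc).reachable
  exact (toInl a).trans (((hG.preconnected _ _).map (inlHom G)).trans (toInl b).symm)

lemma dist_inl_inl_le (hG : G.Connected) (x y : V) :
    (ILT G).dist (.inl x) (.inl y) ≤ G.dist x y := by
  obtain ⟨p, hp⟩ := hG.exists_walk_length_eq_dist x y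
  exact hp ▸ (dist_le (p.map (inlHom G))).trans_eq (p.length_map _)

lemma dist_inl_le (hG : G.Connected) (a : V ⊕ V) (y : V) :
    (ILT G).dist a (.inl y) ≤ max (G.dist (proj a) y) 1 := by
  by_cases hay : proj a = y
  · subst hay
    by_cases ha : a = .inl (proj a)
    · rw [← ha, dist_self]; exact Nat.zero_le _
    · rw [dist_eq_one_iff_adj.mpr (adj_inl_proj_of_ne ha)]; exact le_max_right _ _
  obtain ⟨w, h, hw⟩ := hG.exists_adj_dist_add_one_le hay
  have := (connected hG).dist_triangle (u := a) (v := .inl w) (w := .inl y)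
  have := dist_eq_one_iff_adj.mpr (adj_inl_of_adj h)
  have := dist_inl_inl_le hG w y
  omega

lemma dist_le_max (hG : G.Connected) (a b : V ⊕ V) :
    (ILT G).dist a b ≤ max (G.dist (proj a) (proj b)) 2 := by
  have hb := dist_inl_le hG b (proj b)
  rw [dist_self, dist_comm] at hb
  by_cases hab : proj a = proj b
  · have := (connected hG).dist_triangle (u := a) (v := .inl (proj b)) (w := b)
    have := dist_inl_le hG a (proj b)
    rw [hab, dist_self] at this
    omega
  · obtain ⟨w, h, hw⟩ := hG.exists_adj_dist_add_one_le hab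
    have := (connected hG).dist_triangle (u := a) (v := .inl w) (w := b)
    have := dist_eq_one_iff_adj.mpr (adj_inl_of_adj h)
    have := dist_inl_le hG b w
    rw [dist_comm] at this
    rw [dist_comm (u := w)] at hw
    omega

lemma two_le_dist_inr_inr (hG : G.Connected) {x y : V} (hxy : x ≠ y) :
    2 ≤ (ILT G).dist (.inr x) (.inr y) :=
  (connected hG).one_lt_dist_of_ne_of_not_adj (by simpa) not_adj_inr_inr

lemma exists_eq_inr_of_two_le_dist (hG : G.Connected) {a b : V ⊕ V}
    (h : 2 ≤ (ILT G).dist a b) (hab : G.dist (proj a) (proj b) ≤ 1) : ∃ x, a = .inr x := by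
  rcases a with x | x
  · have := dist_inl_le hG b x
    rw [dist_comm] at this
    rw [proj_inl, dist_comm] at hab
    omega
  · exact ⟨x, rfl⟩

end ILT

namespace ILTVert

def root : (t : ℕ) → ILTVert V t → V
  | 0, x => x
  | t + 1, a => root t (ILT.proj a)

def lift : (t : ℕ) → V → ILTVert V t
  | 0, x => x
  | t + 1, x => Sum.inl (lift t x)

@[simp] lemma root_inr {t : ℕ} (a : ILTVert V t) :
    root (t + 1) (Sum.inr a : ILTVert V (t + 1)) = root t a := rfl

@[simp] lemma root_lift : ∀ (t : ℕ) (x : V), root t (lift t x) = x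
  | 0, _ => rfl
  | t + 1, x => root_lift t x

end ILTVert

namespace ILTiter

open ILTVert

lemma connected (hG : G.Connected) : ∀ t, (ILTiter G t).Connected
  | 0 => hG
  | t + 1 => ILT.connected (connected hG t)

lemma eq_or_adj_root_of_adj : ∀ {t : ℕ} {a b : ILTVert V t}, (ILTiter G t).Adj a b →
    root t a = root t b ∨ G.Adj (root t a) (root t b)
  | 0, _, _, h => .inr h
  | t + 1, _, _, h => (ILT.eq_or_adj_proj_of_adj h).elim (fun h => .inl (congrArg (root t) h))
      eq_or_adj_root_of_adj

lemma dist_root_le (hG : G.Connected) {t : ℕ} (a b : ILTVert V t) :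
    G.dist (root t a) (root t b) ≤ (ILTiter G t).dist a b :=
  ((connected hG t).preconnected a b).dist_le_of_adj_imp fun _ _ h => eq_or_adj_root_of_adj h

lemma dist_le_max (hG : G.Connected) : ∀ {t : ℕ} (a b : ILTVert V t),
    (ILTiter G t).dist a b ≤ max (G.dist (root t a) (root t b)) 2
  | 0, _, _ => le_max_left _ _
  | t + 1, a, b => (ILT.dist_le_max (connected hG t) a b).trans <|
      max_le (dist_le_max hG _ _) (le_max_right _ _)

lemma max_dist_root_le_of_ne (hG : G.Connected) {t : ℕ} {a b : ILTVert V t} (hab : a ≠ b) :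
    max (G.dist (root t a) (root t b)) 1 ≤ (ILTiter G t).dist a b :=
  max_le (dist_root_le hG a b) ((connected hG t).pos_dist_of_ne hab)

lemma max_dist_root_le_inr (hG : G.Connected) {t : ℕ} {a b : ILTVert V t} (hab : a ≠ b) :
    max (G.dist (root t a) (root t b)) 2 ≤ (ILTiter G (t + 1)).dist (.inr a) (.inr b) :=
  max_le (dist_root_le hG (t := t + 1) (.inr a) (.inr b))
    (ILT.two_le_dist_inr_inr (connected hG t) hab)

end ILTiter

section Cooling

variable [Fintype V] {k : ℕ} {v : Fin k → V}

lemma coolTime_le_of_forall_exists {T : ℕ}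
    (h : ∀ u, ∃ i : Fin k, (i : ℕ) + 1 + G.dist (v i) u ≤ T) : coolTime G v ≤ T :=
  Finset.sup_le fun u _ => (h u).elim fun i hi => (Nat.sInf_le (⟨i, rfl⟩ :
    _ ∈ {m | ∃ i : Fin k, m = (i : ℕ) + 1 + G.dist (v i) u})).trans hi

lemma IsCoolingSeq.coolTime_le (hv : IsCoolingSeq G v) : coolTime G v ≤ k + 1 :=
  coolTime_le_of_forall_exists hv.2

lemma le_coolTime_of_forall {T : ℕ} (hk : 0 < k) (u : V)
    (h : ∀ i : Fin k, T ≤ (i : ℕ) + 1 + G.dist (v i) u) : T ≤ coolTime G v := by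
  refine le_trans ?_ (Finset.le_sup (Finset.mem_univ u))
  exact le_csInf ⟨_, ⟨0, hk⟩, rfl⟩ (by rintro _ ⟨i, rfl⟩; exact h i)

end Cooling

open ILTVert in
def cloneSeq {k : ℕ} (s : ℕ) (p : Fin k → V) : Fin k → ILTVert V (s + 1) :=
  fun i => Sum.inr (lift s (p i))

@[simp] lemma root_cloneSeq {k : ℕ} (s : ℕ) (p : Fin k → V) (i : Fin k) :
    ILTVert.root (s + 1) (cloneSeq s p i) = p i := by
  simp [cloneSeq]

open ILTVert in
lemma isCoolingSeq_cloneSeq (hG : G.Connected) {k : ℕ} (s : ℕ) {p : Fin k → V}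
    (hp : Function.Injective p)
    (hgap : ∀ i j : Fin k, i < j → (j : ℕ) - i < max (G.dist (p i) (p j)) 2)
    (hcover : ∀ y, ∃ i : Fin k, (i : ℕ) + 1 + max (G.dist (p i) y) 2 ≤ k + 1) :
    IsCoolingSeq (ILTiter G (s + 1)) (cloneSeq s p) := by
  refine ⟨fun i j hij => ?_, fun u => ?_⟩
  · have hne : lift s (p i) ≠ lift s (p j) := fun h =>
      hij.ne (hp (by simpa using congrArg (root s) h))
    have := ILTiter.max_dist_root_le_inr hG hne
    rw [root_lift, root_lift] at this
    exact (hgap i j hij).trans_le this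
  · obtain ⟨i, hi⟩ := hcover (root (s + 1) u)
    refine ⟨i, le_trans ?_ hi⟩
    simpa [cloneSeq, root] using ILTiter.dist_le_max hG (cloneSeq s p i) u

lemma Finset.card_le_of_forall_val_sub_le {k d : ℕ} {s : Finset (Fin k)}
    (h : ∀ i ∈ s, ∀ j ∈ s, (j : ℕ) - i ≤ d) : s.card ≤ d + 1 := by
  rcases s.eq_empty_or_nonempty with rfl | hs
  · simp
  set i₀ := s.min' hs
  calc s.card = (s.map Fin.valEmbedding).card := (card_map _).symm
    _ ≤ (Icc (i₀ : ℕ) (i₀ + d)).card := card_le_card fun j hj => by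
        obtain ⟨j, hj', rfl⟩ := mem_map.mp hj
        have := h i₀ (s.min'_mem hs) j hj'
        have : i₀ ≤ j := s.min'_le j hj'
        simp only [Fin.valEmbedding_apply, mem_Icc]
        omega
    _ = d + 1 := by simp only [Nat.card_Icc]; omega

/-- Only sources at least two rounds apart are constrained: consecutive ones may share a
position, distinct clones being at distance `2`. -/
def Spaced {k : ℕ} (x : Fin k → ℕ) : Prop :=
  ∀ i j : Fin k, (i : ℕ) + 2 ≤ j → (j : ℕ) - i < Nat.dist (x i) (x j)

def windowCount {k : ℕ} (x : Fin k → ℕ) (a b : ℕ) : ℕ :=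
  (univ.filter fun i => x i ∈ Ico a b).card

section Spaced

variable {k : ℕ} {x : Fin k → ℕ}

lemma windowCount_add {a b c : ℕ} (hab : a ≤ b) (hbc : b ≤ c) :
    windowCount x a c = windowCount x a b + windowCount x b c := by
  unfold windowCount
  rw [← card_union_of_disjoint (disjoint_filter.mpr fun i _ h₁ h₂ => by
    simp only [mem_Ico] at h₁ h₂; omega), ← filter_or]
  congr 1
  apply filter_congr
  intro i _
  simp only [mem_Ico]
  omega

lemma windowCount_zero_of_forall_lt {n : ℕ} (hx : ∀ i, x i < n) : windowCount x 0 n = k := by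
  simp [windowCount, hx]

lemma Spaced.windowCount_le (hx : Spaced x) (a b : ℕ) :
    windowCount x a b ≤ max (b - a - 2) 1 + 1 := by
  refine card_le_of_forall_val_sub_le fun i hi j hj => ?_
  simp only [mem_filter, mem_univ, true_and, mem_Ico] at hi hj
  by_cases hij : (i : ℕ) + 2 ≤ j
  · have := hx i j hij
    unfold Nat.dist at this
    omega
  · omega

lemma Spaced.windowCount_le_two_mul (hx : Spaced x) (a : ℕ) :
    ∀ m, windowCount x a (a + 3 * m) ≤ 2 * m
  | 0 => by simp [windowCount]
  | m + 1 => by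
    rw [windowCount_add (b := a + 3 * m) (by omega) (by omega)]
    have := hx.windowCount_le (a + 3 * m) (a + 3 * (m + 1))
    have := hx.windowCount_le_two_mul a m
    omega

lemma Spaced.length_le (hx : Spaced x) {n : ℕ} (hxn : ∀ i, x i < n) (hn : n ≠ 1) :
    k ≤ (2 * n + 2) / 3 := by
  rw [← windowCount_zero_of_forall_lt hxn]
  obtain ⟨m, r, hr, rfl⟩ : ∃ m r, r < 3 ∧ n = 3 * m + r :=
    ⟨n / 3, n % 3, Nat.mod_lt n (by norm_num), (Nat.div_add_mod n 3).symm⟩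
  have hm := hx.windowCount_le_two_mul 0
  interval_cases r
  · have := hm m
    simp only [zero_add, add_zero] at this ⊢
    omega
  · obtain ⟨m, rfl⟩ : ∃ m', m = m' + 1 := ⟨m - 1, by omega⟩
    rw [windowCount_add (b := 3 * m) (by omega) (by omega)]
    have := hx.windowCount_le (3 * m) (3 * (m + 1) + 1)
    have := hm m
    simp only [zero_add] at this
    omega
  · rw [windowCount_add (b := 3 * m) (by omega) (by omega)]
    have := hx.windowCount_le (3 * m) (3 * m + 2)
    have := hm m
    simp only [zero_add] at this
    omega

lemma Spaced.two_le_windowCount (hx : Spaced x) {m : ℕ} (hxn : ∀ i, x i < 3 * m + 2)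
    (hk : k = 2 * m + 2) {a : ℕ} (ha : a ≤ m) : 2 ≤ windowCount x (3 * a) (3 * a + 2) := by
  have htotal := windowCount_zero_of_forall_lt hxn
  have := windowCount_add (x := x) (a := 0) (b := 3 * a) (c := 3 * m + 2) (by omega) (by omega)
  have := windowCount_add (x := x) (a := 3 * a) (b := 3 * a + 2) (c := 3 * m + 2)
    (by omega) (by omega)
  have := hx.windowCount_le_two_mul 0 a
  have := hx.windowCount_le_two_mul (3 * a + 2) (m - a)
  rw [show 3 * a + 2 + 3 * (m - a) = 3 * m + 2 by omega] at this
  simp only [zero_add] at *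
  omega

end Spaced

lemma Spaced.exists_close_pair {k m : ℕ} {x : Fin k → ℕ} (hx : Spaced x)
    (hxn : ∀ i, x i < 3 * m + 2) (hk : k = 2 * m + 2) {y : ℕ} (hy : y < 3 * m + 2)
    (hfew : (univ.filter fun i => Nat.dist (x i) y ≤ 2).card ≤ 2) :
    ∃ i j, i ≠ j ∧ Nat.dist (x i) y ≤ 1 ∧ Nat.dist (x j) y ≤ 1 ∧
      Nat.dist (x i) (x j) ≤ 1 := by
  have hnear : ∀ a b, (∀ z ∈ Ico a b, Nat.dist z y ≤ 2) → windowCount x a b ≤ 2 :=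
    fun a b h => (card_le_card (monotone_filter_right _ fun i _ hi => h _ hi)).trans hfew
  set c := y / 3
  by_cases hy2 : y % 3 = 2
  · have := windowCount_add (x := x) (a := 3 * c) (b := 3 * c + 2) (c := 3 * c + 5)
      (by omega) (by omega)
    have := windowCount_add (x := x) (a := 3 * c + 2) (b := 3 * c + 3) (c := 3 * c + 5)
      (by omega) (by omega)
    have := hx.two_le_windowCount hxn hk (a := c) (by omega)
    have h₄ := hx.two_le_windowCount hxn hk (a := c + 1) (by omega)
    rw [show 3 * (c + 1) + 2 = 3 * c + 5 by ring, show 3 * (c + 1) = 3 * c + 3 by ring] at h₄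
    have := hnear (3 * c) (3 * c + 5) fun z hz => by
      simp only [mem_Ico] at hz
      unfold Nat.dist
      omega
    omega
  · obtain ⟨i, hi, j, hj, hij⟩ :=
      one_lt_card.mp (hx.two_le_windowCount hxn hk (a := c) (by omega))
    simp only [mem_filter, mem_univ, true_and, mem_Ico] at hi hj
    exact ⟨i, j, hij, by unfold Nat.dist; omega, by unfold Nat.dist; omega,
      by unfold Nat.dist; omega⟩

lemma ILT.false_of_pathGraph_three_close {n : ℕ} {a b w : Fin n ⊕ Fin n}
    (hab : 2 ≤ (ILT (pathGraph n)).dist a b) (haw : 2 ≤ (ILT (pathGraph n)).dist a w)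
    (hbw : b ≠ w) (hab' : Nat.dist (proj a).val (proj b).val ≤ 1)
    (haw' : Nat.dist (proj a).val (proj w).val ≤ 1)
    (hbw' : Nat.dist (proj b).val (proj w).val ≤ 1) : False := by
  have hG := pathGraph_connected_of_pos (proj a).pos
  rw [← pathGraph_dist] at hab' haw' hbw'
  obtain ⟨p, rfl⟩ := exists_eq_inr_of_two_le_dist hG hab hab'
  obtain ⟨q, rfl⟩ :=
    exists_eq_inr_of_two_le_dist hG (dist_comm.trans_ge hab) (dist_comm.trans_le hab')
  obtain ⟨r, rfl⟩ :=
    exists_eq_inr_of_two_le_dist hG (dist_comm.trans_ge haw) (dist_comm.trans_le haw')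
  have hpq : p ≠ q := by rintro rfl; simp at hab
  have hpr : p ≠ r := by rintro rfl; simp at haw
  have hqr : q ≠ r := by rintro rfl; simp at hbw
  simp only [proj_inr, pathGraph_dist] at hab' haw' hbw'
  rw [Ne, Fin.ext_iff] at hpq hpr hqr
  unfold Nat.dist at *
  omega

section Path

open ILTVert

variable {n k t : ℕ}

lemma IsCoolingSeq.spaced_root {v : Fin k → ILTVert (Fin n) t}
    (hv : IsCoolingSeq (ILTiter (pathGraph n) t) v) : Spaced fun i => (root t (v i)).val := by
  intro i j hij
  have hG := pathGraph_connected_of_pos (root t (v i)).pos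
  have := (hv.1 i j (Fin.lt_def.mpr (by omega))).trans_le (ILTiter.dist_le_max hG _ _)
  rw [pathGraph_dist] at this
  show (j : ℕ) - i < Nat.dist (root t (v i)).val (root t (v j)).val
  omega

lemma IsCoolingSeq.length_le_of_pathGraph (hn : n ≠ 1) {v : Fin k → ILTVert (Fin n) t}
    (hv : IsCoolingSeq (ILTiter (pathGraph n) t) v) : k ≤ (2 * n + 2) / 3 :=
  hv.spaced_root.length_le (fun i => (root t (v i)).isLt) hn

lemma IsCoolingSeq.coolTime_le_of_mod_three_eq_two (hn : n % 3 = 2)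
    {v : Fin k → ILTVert (Fin n) 1} (hv : IsCoolingSeq (ILTiter (pathGraph n) 1) v) :
    coolTime (ILTiter (pathGraph n) 1) v ≤ (2 * n + 2) / 3 := by
  obtain ⟨m, rfl⟩ : ∃ m, n = 3 * m + 2 := ⟨n / 3, by omega⟩
  have hG := pathGraph_connected_of_pos (n := 3 * m + 2) (by omega)
  rcases (hv.length_le_of_pathGraph (by omega)).lt_or_eq with hlt | hk
  · have := hv.coolTime_le
    omega
  refine coolTime_le_of_forall_exists fun u => ?_
  by_contra! hlate
  have hnear (i) (hi : Nat.dist (root 1 (v i)).val (root 1 u).val ≤ 2) : k ≤ i + 2 := by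
    have := ILTiter.dist_le_max hG (v i) u
    rw [pathGraph_dist] at this
    have := hlate i
    omega
  have hfew : (univ.filter fun i => Nat.dist (root 1 (v i)).val (root 1 u).val ≤ 2).card ≤ 2 :=
    card_le_of_forall_val_sub_le fun i hi j hj => by
      simp only [mem_filter, mem_univ, true_and] at hi hj
      have := hnear i hi
      have := j.isLt
      omega
  obtain ⟨i, j, hij, hiu, hju, hij'⟩ := hv.spaced_root.exists_close_pair
    (fun i => (root 1 (v i)).isLt) (by omega) (root 1 u).isLt hfew
  wlog hlt : i < j generalizing i j
  · exact this j i hij.symm hju hiu (by rwa [Nat.dist_comm])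
      (lt_of_le_of_ne (not_lt.mp hlt) hij.symm)
  have hik := hnear i (by omega)
  have hlate_i := hlate i
  have hlate_j := hlate j
  have hgap := hv.1 i j hlt
  have hjk := j.isLt
  have h₁ : 2 ≤ (ILTiter (pathGraph (3 * m + 2)) 1).dist (v i) (v j) := by omega
  have h₂ : 2 ≤ (ILTiter (pathGraph (3 * m + 2)) 1).dist (v i) u := by omega
  refine ILT.false_of_pathGraph_three_close h₁ h₂ (fun h => ?_) hij' hiu hju
  subst h
  rw [SimpleGraph.dist_self] at hlate_j
  omega

end Path

/-- The `i`-th natural number that is not `≡ 2 (mod 3)`: `0, 1, 3, 4, 6, 7, …`. -/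
def skipMod3 (i : ℕ) : ℕ := 3 * (i / 2) + i % 2

def pathSources (n : ℕ) : Fin ((2 * n + 2) / 3) → Fin n :=
  fun i => ⟨skipMod3 i, by have := i.isLt; unfold skipMod3; omega⟩

@[simp] lemma coe_pathSources {n : ℕ} (i : Fin ((2 * n + 2) / 3)) :
    (pathSources n i : ℕ) = skipMod3 i := rfl

section Construction

open ILTVert

variable {n : ℕ}

lemma isCoolingSeq_pathClones (hn : 2 ≤ n) (s : ℕ) :
    IsCoolingSeq (ILTiter (pathGraph n) (s + 1)) (cloneSeq s (pathSources n)) := by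
  refine isCoolingSeq_cloneSeq (pathGraph_connected_of_pos (by omega)) s
    (fun i j h => ?_) (fun i j hij => ?_) (fun y => ?_)
  · rw [Fin.ext_iff, coe_pathSources, coe_pathSources] at h
    unfold skipMod3 at h
    exact Fin.ext (by omega)
  · rw [pathGraph_dist, coe_pathSources, coe_pathSources, Fin.lt_def] at *
    unfold skipMod3 Nat.dist
    omega
  · have := y.isLt
    -- the source at `3 * (y / 3)`, or the one at `n - 3` for `y = n - 1` when `n ≡ 1 (mod 3)`
    refine ⟨⟨min (2 * (y / 3)) ((2 * n + 2) / 3 - 2), by omega⟩, ?_⟩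
    rw [pathGraph_dist, coe_pathSources]
    dsimp only
    unfold skipMod3 Nat.dist
    omega

lemma le_coolTime_pathClones (hn : 2 ≤ n) (s : ℕ) :
    (if s + 1 = 1 ∧ n % 3 = 2 then (2 * n + 2) / 3 else (2 * n + 2) / 3 + 1) ≤
      coolTime (ILTiter (pathGraph n) (s + 1)) (cloneSeq s (pathSources n)) := by
  have hG := pathGraph_connected_of_pos (n := n) (by omega)
  obtain ⟨y, hy⟩ : ∃ y : Fin n, (y : ℕ) = n - 1 := ⟨⟨n - 1, by omega⟩, rfl⟩
  cases s with
  | zero =>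
    refine le_coolTime_of_forall (by omega) (lift 1 y) fun i => ?_
    have h := ILTiter.max_dist_root_le_of_ne hG (a := cloneSeq 0 (pathSources n) i)
      (b := lift 1 y) Sum.inr_ne_inl
    rw [root_cloneSeq, root_lift, pathGraph_dist, coe_pathSources] at h
    have := i.isLt
    unfold Nat.dist skipMod3 at h
    rw [hy] at h
    simp only [zero_add, true_and]
    rcases (by omega : n % 3 = 0 ∨ n % 3 = 1 ∨ n % 3 = 2) with h3 | h3 | h3 <;>
      split_ifs <;> omega
  | succ s =>
    refine le_coolTime_of_forall (by omega)
      (Sum.inr (Sum.inr (lift s y) : ILTVert (Fin n) (s + 1))) fun i => ?_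
    have h : _ ≤
        (ILTiter (pathGraph n) (s + 1 + 1)).dist (cloneSeq (s + 1) (pathSources n) i) _ :=
      ILTiter.max_dist_root_le_inr hG (a := lift (s + 1) (pathSources n i))
        (b := Sum.inr (lift s y)) Sum.inl_ne_inr
    rw [root_lift, root_inr, root_lift, pathGraph_dist, coe_pathSources] at h
    have := i.isLt
    unfold Nat.dist skipMod3 at h
    rw [hy, if_neg (by omega)] at *
    omega

end Construction

/-- For `n ≥ 3` and `t ≥ 1`, the cooling number of `ILT_t(P_n)` equals `⌈2n/3⌉` if
`t = 1` and `n ≡ 2 (mod 3)`, and `⌈2n/3⌉ + 1` otherwise. -/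
theorem coolingNumber_ILTiter_pathGraph (n t : ℕ) (hn : 3 ≤ n) (ht : 1 ≤ t) :
    coolingNumber (ILTiter (SimpleGraph.pathGraph n) t) =
      if t = 1 ∧ n % 3 = 2 then (2 * n + 2) / 3 else (2 * n + 2) / 3 + 1 := by
  obtain ⟨s, rfl⟩ : ∃ s, t = s + 1 := ⟨t - 1, by omega⟩
  have upper : ∀ (k : ℕ) (v : Fin k → ILTVert (Fin n) (s + 1)),
      IsCoolingSeq (ILTiter (pathGraph n) (s + 1)) v →
      coolTime (ILTiter (pathGraph n) (s + 1)) v ≤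
        if s + 1 = 1 ∧ n % 3 = 2 then (2 * n + 2) / 3 else (2 * n + 2) / 3 + 1 := by
    intro k v hv
    split_ifs with h
    · obtain ⟨hs, hn2⟩ := h
      obtain rfl : s = 0 := by omega
      exact hv.coolTime_le_of_mod_three_eq_two hn2
    · have := hv.coolTime_le
      have := hv.length_le_of_pathGraph (by omega)
      omega
  have hv := isCoolingSeq_pathClones (n := n) (by omega) s
  refine IsGreatest.csSup_eq ⟨⟨_, _, hv, le_antisymm (le_coolTime_pathClones (by omega) s)
    (upper _ _ hv)⟩, ?_⟩
  rintro T ⟨k, v, hv, rfl⟩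
  exact upper k v hv
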